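/- Let θ₁, θ₂, θ₃ ∈ (0, π/2) be real numbers with θ₁ + θ₂ + θ₃ = π. Then δ(θ₁, θ₂, θ₃) ≥ π/√12, with equality if and only if θ₁ = θ₂ = θ₃ = π/3. -/

import Mathlib

/-!
With `c = π / √12` and `g(θ) = (π/2 - θ) tan² θ - c tan θ`, the density exceeds `c` by
`(g θ₁ + g θ₂ + g θ₃) / (tan θ₁ + tan θ₂ + tan θ₃)`. The function `g` vanishes at `π/3` and is
strictly convex on `(0, π/2)`, so Jensen's inequality at the mean `π/3` gives the bound together
with its equality case. Convexity reduces to `3 tan θ ≤ (π/2 - θ)(1 + 3 tan² θ)`, which is the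
bound `3x / (x² + 3) ≤ arctan x` at `x = cot θ`.
-/

open Real

/-- The density of three mutually tangent circles of radii `tan θᵢ` (normalized so that
the inradius of the triangle of centers is `1`) inside the triangle of their centers. -/
noncomputable def triDensity (θ₁ θ₂ θ₃ : ℝ) : ℝ :=
  ((π / 2 - θ₁) * tan θ₁ ^ 2 + (π / 2 - θ₂) * tan θ₂ ^ 2 + (π / 2 - θ₃) * tan θ₃ ^ 2) /
    (tan θ₁ + tan θ₂ + tan θ₃)

lemma hasDerivAt_arctan_sub_three_mul_div (x : ℝ) :
    HasDerivAt (fun t => arctan t - 3 * t / (t ^ 2 + 3))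
      (4 * x ^ 4 / ((1 + x ^ 2) * (x ^ 2 + 3) ^ 2)) x := by
  have hquot : HasDerivAt (fun t => 3 * t / (t ^ 2 + 3))
      ((3 * (x ^ 2 + 3) - 3 * x * (2 * x)) / (x ^ 2 + 3) ^ 2) x := by
    simpa [mul_comm] using ((hasDerivAt_id x).const_mul 3).fun_div
      (((hasDerivAt_id x).fun_pow 2).add_const 3) (by positivity)
  refine ((hasDerivAt_arctan x).sub hquot).congr_deriv ?_
  field_simp
  ring

lemma three_mul_div_sq_add_three_le_arctan {x : ℝ} (hx : 0 ≤ x) :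
    3 * x / (x ^ 2 + 3) ≤ arctan x := by
  have hmono : Monotone (fun t => arctan t - 3 * t / (t ^ 2 + 3)) :=
    monotone_of_deriv_nonneg (fun t => (hasDerivAt_arctan_sub_three_mul_div t).differentiableAt)
      fun t => (hasDerivAt_arctan_sub_three_mul_div t).deriv ▸ by positivity
  simpa using hmono hx

lemma three_mul_tan_le {θ : ℝ} (h0 : 0 < θ) (hθ : θ < π / 2) :
    3 * tan θ ≤ (π / 2 - θ) * (1 + 3 * tan θ ^ 2) := by
  have ht : 0 < tan θ := tan_pos_of_pos_of_lt_pi_div_two h0 hθ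
  have hcomp : π / 2 - θ = arctan (tan θ)⁻¹ := by
    rw [arctan_inv_of_pos ht, arctan_tan (by linarith) hθ]
  have hbound := three_mul_div_sq_add_three_le_arctan (inv_pos.mpr ht).le
  rwa [← hcomp, show 3 * (tan θ)⁻¹ / ((tan θ)⁻¹ ^ 2 + 3) = 3 * tan θ / (1 + 3 * tan θ ^ 2) by
    field_simp, div_le_iff₀ (by positivity)] at hbound

lemma strictConvexOn_of_hasDerivAt2_pos {D : Set ℝ} (hD : Convex ℝ D) (hDo : IsOpen D)
    {f f' f'' : ℝ → ℝ} (hf : ∀ x ∈ D, HasDerivAt f (f' x) x)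
    (hf' : ∀ x ∈ D, HasDerivAt f' (f'' x) x) (hf''_pos : ∀ x ∈ D, 0 < f'' x) :
    StrictConvexOn ℝ D f := by
  refine strictConvexOn_of_deriv2_pos' hD (fun x hx => (hf x hx).continuousAt.continuousWithinAt)
    fun x hx => ?_
  have hderiv : deriv f =ᶠ[nhds x] f' :=
    Filter.eventuallyEq_of_mem (hDo.mem_nhds hx) fun y hy => (hf y hy).deriv
  rw [Function.iterate_succ_apply, Function.iterate_one, hderiv.deriv_eq, (hf' x hx).deriv]
  exact hf''_pos x hx

lemma hasDerivAt_tan_of_cos_ne_zero {x : ℝ} (hx : cos x ≠ 0) :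
    HasDerivAt tan (1 + tan x ^ 2) x := by
  simpa [← inv_one_add_tan_sq hx] using hasDerivAt_tan hx

noncomputable def densityExcess (c θ : ℝ) : ℝ := (π / 2 - θ) * tan θ ^ 2 - c * tan θ

lemma hasDerivAt_densityExcess (c : ℝ) {θ : ℝ} (hθ : cos θ ≠ 0) :
    HasDerivAt (densityExcess c)
      (-tan θ ^ 2 + (π / 2 - θ) * (2 * tan θ * (1 + tan θ ^ 2)) - c * (1 + tan θ ^ 2)) θ := by
  have htan := hasDerivAt_tan_of_cos_ne_zero hθ
  refine ((((hasDerivAt_id θ).const_sub (π / 2)).fun_mul (htan.fun_pow 2)).sub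
    (htan.const_mul c)).congr_deriv ?_
  simp only [id_eq, Nat.cast_ofNat]
  ring

lemma hasDerivAt_deriv_densityExcess (c : ℝ) {θ : ℝ} (hθ : cos θ ≠ 0) :
    HasDerivAt (fun θ => -tan θ ^ 2 + (π / 2 - θ) * (2 * tan θ * (1 + tan θ ^ 2)) -
        c * (1 + tan θ ^ 2))
      (2 * (1 + tan θ ^ 2) * ((π / 2 - θ) * (1 + 3 * tan θ ^ 2) - (2 + c) * tan θ)) θ := by
  have htan := hasDerivAt_tan_of_cos_ne_zero hθ
  have hsq := htan.fun_pow 2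
  refine ((hsq.neg.add (((hasDerivAt_id θ).const_sub (π / 2)).fun_mul
    ((htan.const_mul 2).fun_mul (hsq.const_add 1)))).sub
      ((hsq.const_add 1).const_mul c)).congr_deriv ?_
  simp only [id_eq, Nat.cast_ofNat]
  ring

lemma strictConvexOn_densityExcess {c : ℝ} (hc : c < 1) :
    StrictConvexOn ℝ (Set.Ioo 0 (π / 2)) (densityExcess c) := by
  have hcos : ∀ θ ∈ Set.Ioo 0 (π / 2), cos θ ≠ 0 := fun θ hθ =>
    (cos_pos_of_mem_Ioo ⟨by linarith [hθ.1, pi_pos], hθ.2⟩).ne'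
  refine strictConvexOn_of_hasDerivAt2_pos (convex_Ioo _ _) isOpen_Ioo
    (fun θ hθ => hasDerivAt_densityExcess c (hcos θ hθ))
    (fun θ hθ => hasDerivAt_deriv_densityExcess c (hcos θ hθ)) fun θ ⟨h0, hθ⟩ => ?_
  have ht : 0 < tan θ := tan_pos_of_pos_of_lt_pi_div_two h0 hθ
  have := three_mul_tan_le h0 hθ
  have : 0 < (π / 2 - θ) * (1 + 3 * tan θ ^ 2) - (2 + c) * tan θ := by nlinarith
  positivity

section ThreePoints

variable {s : Set ℝ} {f : ℝ → ℝ} {x y z : ℝ}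

private lemma sum_fin_three_third (g : ℝ → ℝ) :
    ∑ i, (1 / 3 : ℝ) • g (![x, y, z] i) = (g x + g y + g z) / 3 := by
  simp only [Fin.sum_univ_three, Matrix.cons_val, smul_eq_mul]
  ring

private lemma sum_fin_three_third_self :
    ∑ i, (1 / 3 : ℝ) • ![x, y, z] i = (x + y + z) / 3 :=
  sum_fin_three_third id

private lemma mem_of_fin_three (hx : x ∈ s) (hy : y ∈ s) (hz : z ∈ s) :
    ∀ i ∈ Finset.univ, ![x, y, z] i ∈ s := by
  simp [Fin.forall_fin_succ, hx, hy, hz]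

private lemma sum_third_fin_three : ∑ _i : Fin 3, (1 / 3 : ℝ) = 1 := by norm_num

lemma ConvexOn.map_add_add_div_three_le (hf : ConvexOn ℝ s f) (hx : x ∈ s) (hy : y ∈ s)
    (hz : z ∈ s) : f ((x + y + z) / 3) ≤ (f x + f y + f z) / 3 := by
  have := hf.map_sum_le (by norm_num) sum_third_fin_three (mem_of_fin_three hx hy hz)
  rwa [sum_fin_three_third f, sum_fin_three_third_self] at this

lemma StrictConvexOn.map_add_add_div_three_eq_iff (hf : StrictConvexOn ℝ s f) (hx : x ∈ s)
    (hy : y ∈ s) (hz : z ∈ s) :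
    f ((x + y + z) / 3) = (f x + f y + f z) / 3 ↔ x = y ∧ y = z := by
  have := hf.map_sum_eq_iff (by norm_num) sum_third_fin_three (mem_of_fin_three hx hy hz)
  rw [sum_fin_three_third f, sum_fin_three_third_self] at this
  simp only [this, Finset.mem_univ, true_implies, Fin.forall_fin_succ, Matrix.cons_val_zero,
    Matrix.cons_val_succ, IsEmpty.forall_iff, and_true]
  constructor
  · rintro ⟨h₁, h₂, h₃⟩
    constructor <;> linarith
  · rintro ⟨rfl, rfl⟩
    refine ⟨?_, ?_, ?_⟩ <;> ring

end ThreePoints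

lemma triDensity_eq_add_densityExcess {θ₁ θ₂ θ₃ : ℝ} (hS : tan θ₁ + tan θ₂ + tan θ₃ ≠ 0)
    (c : ℝ) : triDensity θ₁ θ₂ θ₃ = c + (densityExcess c θ₁ + densityExcess c θ₂ +
      densityExcess c θ₃) / (tan θ₁ + tan θ₂ + tan θ₃) := by
  unfold triDensity densityExcess
  field_simp
  ring

lemma pi_div_sqrt_twelve_lt_one : π / √12 < 1 := by
  have h : π < √12 := by
    rw [show π = √(π ^ 2) from (sqrt_sq pi_pos.le).symm]
    exact sqrt_lt_sqrt (by positivity) (by nlinarith [pi_lt_d2, pi_pos])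
  rwa [div_lt_one (by positivity)]

lemma densityExcess_pi_div_three : densityExcess (π / √12) (π / 3) = 0 := by
  have h12 : √12 = 2 * √3 := by
    rw [show (12 : ℝ) = 2 ^ 2 * 3 by norm_num, sqrt_mul (by norm_num), sqrt_sq (by norm_num)]
  have h3 : √3 ^ 2 = 3 := sq_sqrt (by norm_num)
  unfold densityExcess
  rw [tan_pi_div_three, h12, h3]
  field_simp
  ring

theorem min_density_angles (θ₁ θ₂ θ₃ : ℝ)
    (h₁ : θ₁ ∈ Set.Ioo 0 (π / 2)) (h₂ : θ₂ ∈ Set.Ioo 0 (π / 2))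
    (h₃ : θ₃ ∈ Set.Ioo 0 (π / 2)) (hsum : θ₁ + θ₂ + θ₃ = π) :
    triDensity θ₁ θ₂ θ₃ ≥ π / Real.sqrt 12 ∧
      (triDensity θ₁ θ₂ θ₃ = π / Real.sqrt 12 ↔
        θ₁ = π / 3 ∧ θ₂ = π / 3 ∧ θ₃ = π / 3) := by
  have hconvex := strictConvexOn_densityExcess pi_div_sqrt_twelve_lt_one
  have hjensen := hconvex.convexOn.map_add_add_div_three_le h₁ h₂ h₃
  have hequality := hconvex.map_add_add_div_three_eq_iff h₁ h₂ h₃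
  rw [hsum, densityExcess_pi_div_three] at hjensen hequality
  have htan : ∀ θ ∈ Set.Ioo 0 (π / 2), 0 < tan θ := fun θ hθ =>
    tan_pos_of_pos_of_lt_pi_div_two hθ.1 hθ.2
  have hS : 0 < tan θ₁ + tan θ₂ + tan θ₃ := by
    linarith [htan θ₁ h₁, htan θ₂ h₂, htan θ₃ h₃]
  rw [triDensity_eq_add_densityExcess hS.ne']
  refine ⟨le_add_of_nonneg_right (div_nonneg (by linarith) hS.le), ?_⟩
  rw [add_eq_left, div_eq_zero_iff, or_iff_left hS.ne']
  constructor
  · intro hzero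
    obtain ⟨h12, h23⟩ := hequality.mp (by linarith)
    refine ⟨?_, ?_, ?_⟩ <;> linarith
  · rintro ⟨rfl, rfl, rfl⟩
    simp [densityExcess_pi_div_three]
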